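/- arXiv:1704.08329 — 2 statements merged into one kernel-verified Lean document; each statement's English description precedes it below -/
import Mathlib

section
/- Let w ∈ 𝕀(θ) and s ∈ S. Then the rank ρ(w·ŝ) equals ρ(w) + 1 or ρ(w) − 1, where ρ(u) denotes the minimum length of a word ŝ₁⋯ŝₖ in the monoid alphabet with e·ŝ₁⋯ŝₖ = u. -/
attribute [local instance] Classical.propDecidable
open CoxeterSystem List

variable {B : Type*} {M : CoxeterMatrix B} {W : Type*} [Group W]

/-- The right action of the symbol `ŝᵢ` on `w`: `w·ŝ = ws` if `θ(s)ws = w`, else `θ(s)ws`. -/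
noncomputable def twMul (cs : CoxeterSystem M W) (θ : W ≃* W) (w : W) (i : B) : W :=
  if θ (cs.simple i) * w * cs.simple i = w then w * cs.simple i
  else θ (cs.simple i) * w * cs.simple i

/-- The right action of a word in the symbols `ŝᵢ` on `w`. -/
noncomputable def twWord (cs : CoxeterSystem M W) (θ : W ≃* W) (w : W) (ω : List B) : W :=
  ω.foldl (twMul cs θ) w

/-- The set of twisted involutions `𝕀(θ) = {w : θ(w) = w⁻¹}`. -/
def TwistedInvolutions (θ : W ≃* W) : Set W := {w : W | θ w = w⁻¹}

/-- The rank of a twisted involution: the minimal length of an `Ŝ`-expression for it. -/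
noncomputable def twRank (cs : CoxeterSystem M W) (θ : W ≃* W) (w : W) : ℕ :=
  sInf {n | ∃ ω : List B, ω.length = n ∧ twWord cs θ 1 ω = w}

/-- `ω` is a reduced `Ŝ`-expression for `w`. -/
def IsReducedS (cs : CoxeterSystem M W) (θ : W ≃* W) (ω : List B) (w : W) : Prop :=
  twWord cs θ 1 ω = w ∧ ω.length = twRank cs θ w

/-- `w` is `(i,i')`-maximal: it has a reduced `Ŝ`-expression ending with the alternating
word `⋯ŝ'ŝ` of length `M i i'` (ending with `ŝᵢ`). -/
def IsMaximalS (cs : CoxeterSystem M W) (θ : W ≃* W) (w : W) (i i' : B) : Prop :=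
  ∃ ω : List B, IsReducedS cs θ (ω ++ alternatingWord i' i (M i i')) w

/-- The Bruhat order on `W`, via the subword property. -/
def BruhatLE (cs : CoxeterSystem M W) (u w : W) : Prop :=
  ∃ ω ω' : List B, cs.IsReduced ω ∧ cs.wordProd ω = w ∧ ω'.Sublist ω ∧ cs.wordProd ω' = u

/-!
Every twisted involution has an `Ŝ`-expression (descend along right descents), and `·ŝ` is an
involution, so `ρ(w·ŝ) ≤ ρ(w) + 1` and `ρ(w) ≤ ρ(w·ŝ) + 1`; what remains is that all
`Ŝ`-expressions of a twisted involution have lengths of the same parity.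

Let `π` be the geometric representation on `⊕_b ℝ α_b` and `θ̂ α_b = α_{σ b}`, and let `d(u)` be
the dimension of the `-1`-eigenspace of `π(u) θ̂` (inside the span of finitely many `α_b`).
A step `u ↦ u·ŝ` changes `ℓ(u) + d(u)` by exactly `±2`: if `u·ŝ = us`, then `u s u⁻¹ = θ(s)`
forces `π(u) α_s = ±α_{θ(s)}`, and `ℓ` and `d` move by one in the same direction; otherwise
`u·ŝ = θ(s) u s`, `d` is unchanged and `ℓ` moves by two. So an expression of length `k` has
`ℓ(u) + d(u) ≡ d(e) + 2k (mod 4)`. Both length computations rest on the positivity of roots: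
`π(w) α_s ≥ 0` when `ℓ(ws) > ℓ(w)`.
-/

local notation "α" b:max => Finsupp.single b (1 : ℝ)

noncomputable section

lemma sin_pi_div_pos {m : ℕ} (hm : 2 ≤ m) : 0 < Real.sin (Real.pi / m) := by
  have hm' : (2 : ℝ) ≤ m := by exact_mod_cast hm
  apply Real.sin_pos_of_pos_of_lt_pi (by positivity)
  rw [div_lt_iff₀ (by linarith)]
  nlinarith [Real.pi_pos]

/-- `chebSeq (-2 cos φ) n = sin (n φ) / sin φ`; it is `U_{n-1}(-c/2)` for the Chebyshev
polynomials `U` of the second kind. -/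
def chebSeq (c : ℝ) : ℕ → ℝ
  | 0 => 0
  | 1 => 1
  | n + 2 => -c * chebSeq c (n + 1) - chebSeq c n

lemma chebSeq_add_two (c : ℝ) (n : ℕ) :
    chebSeq c (n + 2) = -c * chebSeq c (n + 1) - chebSeq c n := rfl

lemma chebSeq_mul_sin (φ : ℝ) (n : ℕ) :
    chebSeq (-2 * Real.cos φ) n * Real.sin φ = Real.sin (n * φ) := by
  induction n using Nat.twoStepInduction with
  | zero => simp [chebSeq]
  | one => simp [chebSeq]
  | more n ih₀ ih₁ =>
    have h₂ : ((n + 2 : ℕ) : ℝ) * φ = (n + 1 : ℕ) * φ + φ := by push_cast; ring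
    have h₀ : (n : ℝ) * φ = (n + 1 : ℕ) * φ - φ := by push_cast; ring
    rw [chebSeq_add_two, h₂, Real.sin_add]
    rw [h₀, Real.sin_sub] at ih₀
    linear_combination (2 * Real.cos φ) * ih₁ - ih₀

lemma chebSeq_neg_two (n : ℕ) : chebSeq (-2) n = n := by
  induction n using Nat.twoStepInduction with
  | zero => simp [chebSeq]
  | one => simp [chebSeq]
  | more n ih₀ ih₁ =>
    rw [chebSeq_add_two, ih₀, ih₁]
    push_cast
    ring

lemma chebSeq_nonneg {m n : ℕ} (hm : 2 ≤ m) (hn : n ≤ m) :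
    0 ≤ chebSeq (-2 * Real.cos (Real.pi / m)) n := by
  have hsin := sin_pi_div_pos hm
  have hnm : (n : ℝ) * (Real.pi / m) ≤ Real.pi := by
    have : (n : ℝ) ≤ m := by exact_mod_cast hn
    rw [mul_div_assoc', div_le_iff₀ (by positivity)]
    nlinarith [Real.pi_pos]
  have := Real.sin_nonneg_of_nonneg_of_le_pi (by positivity) hnm
  rw [← chebSeq_mul_sin] at this
  exact nonneg_of_mul_nonneg_left this hsin

lemma chebSeq_eq_of_sin_eq {m n : ℕ} (hm : 2 ≤ m) {x : ℝ}
    (h : Real.sin (n * (Real.pi / m)) = x * Real.sin (Real.pi / m)) :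
    chebSeq (-2 * Real.cos (Real.pi / m)) n = x :=
  mul_right_cancel₀ (sin_pi_div_pos hm).ne' ((chebSeq_mul_sin _ n).trans h)

lemma chebSeq_two_mul {m : ℕ} (hm : 2 ≤ m) :
    chebSeq (-2 * Real.cos (Real.pi / m)) (2 * m) = 0 := by
  refine chebSeq_eq_of_sin_eq hm ?_
  have : ((2 * m : ℕ) : ℝ) * (Real.pi / m) = 2 * Real.pi := by
    have : (m : ℝ) ≠ 0 := by positivity
    push_cast
    field_simp
  rw [this, Real.sin_two_pi, zero_mul]

lemma chebSeq_two_mul_add_one {m : ℕ} (hm : 2 ≤ m) :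
    chebSeq (-2 * Real.cos (Real.pi / m)) (2 * m + 1) = 1 := by
  refine chebSeq_eq_of_sin_eq hm ?_
  have : ((2 * m + 1 : ℕ) : ℝ) * (Real.pi / m) = Real.pi / m + 2 * Real.pi := by
    have : (m : ℝ) ≠ 0 := by positivity
    push_cast
    field_simp
    ring
  rw [this, Real.sin_add_two_pi, one_mul]

lemma mul_pow_mul_mul_pow_eq_one {G : Type*} [Monoid G] {a b : G} (ha : a * a = 1)
    (hb : b * b = 1) (n : ℕ) : (a * b) ^ n * (b * a) ^ n = 1 := by
  induction n with
  | zero => simp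
  | succ n ih =>
    calc (a * b) ^ (n + 1) * (b * a) ^ (n + 1)
        = (a * b) ^ n * (a * (b * b) * a) * (b * a) ^ n := by
          rw [pow_succ, pow_succ']; simp only [mul_assoc]
      _ = 1 := by rw [hb, mul_one, ha, mul_one, ih]

lemma ite_even_and {p : B → Prop} {i j : B} {k : ℕ} (h₁ : p (if Even (k + 1) then j else i))
    (h₀ : p (if Even k then j else i)) : p i ∧ p j := by
  by_cases hk : Even k
  · simp only [hk, Nat.even_add_one, not_true, if_true, if_false] at h₀ h₁
    exact ⟨h₁, h₀⟩
  · simp only [hk, Nat.even_add_one, not_false_eq_true, if_true, if_false] at h₀ h₁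
    exact ⟨h₀, h₁⟩

namespace CoxeterMatrix

variable (M)

/-- Twice the standard bilinear form on simple roots, `2 B(α_a, α_b)`. For `M a b = 0`
(`m = ∞`) the junk value `π / 0 = 0` yields the intended `-2`. -/
def bilinCoeff (a b : B) : ℝ := -2 * Real.cos (Real.pi / M a b)

def pairing (b : B) : (B →₀ ℝ) →ₗ[ℝ] ℝ := Finsupp.linearCombination ℝ (M.bilinCoeff · b)

def simpleReflection (b : B) : Module.End ℝ (B →₀ ℝ) :=
  LinearMap.id - (M.pairing b).smulRight (α b)

def form : (B →₀ ℝ) →ₗ[ℝ] (B →₀ ℝ) →ₗ[ℝ] ℝ := Finsupp.linearCombination ℝ M.pairing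

def wordReflection (ω : List B) : Module.End ℝ (B →₀ ℝ) := (ω.map M.simpleReflection).prod

def rootPerm (σ : B → B) : Module.End ℝ (B →₀ ℝ) := Finsupp.lmapDomain ℝ ℝ σ

variable {M}

lemma bilinCoeff_symm (a b : B) : M.bilinCoeff a b = M.bilinCoeff b a := by
  rw [bilinCoeff, bilinCoeff, M.symmetric]

lemma bilinCoeff_self (a : B) : M.bilinCoeff a a = 2 := by
  simp [bilinCoeff]

lemma bilinCoeff_of_eq_zero {a b : B} (h : M a b = 0) : M.bilinCoeff a b = -2 := by
  simp [bilinCoeff, h]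

lemma bilinCoeff_sq_lt_four {a b : B} (h : 2 ≤ M a b) : M.bilinCoeff a b ^ 2 < 4 := by
  have := sin_pi_div_pos h
  have := Real.sin_sq_add_cos_sq (Real.pi / M a b)
  simp only [bilinCoeff]
  nlinarith

lemma pairing_single (a b : B) (x : ℝ) :
    M.pairing b (Finsupp.single a x) = x * M.bilinCoeff a b := by
  simp [pairing]

lemma pairing_root (a b : B) : M.pairing b (α a) = M.bilinCoeff a b := by
  simp [pairing_single]

lemma simpleReflection_apply (b : B) (v : B →₀ ℝ) :
    M.simpleReflection b v = v - M.pairing b v • α b := rfl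

lemma simpleReflection_root (a b : B) :
    M.simpleReflection b (α a) = α a - M.bilinCoeff a b • α b := by
  rw [simpleReflection_apply, pairing_root]

lemma simpleReflection_root_self (b : B) : M.simpleReflection b (α b) = -α b := by
  rw [simpleReflection_root, bilinCoeff_self]
  module

lemma simpleReflection_simpleReflection (b : B) (v : B →₀ ℝ) :
    M.simpleReflection b (M.simpleReflection b v) = v := by
  rw [simpleReflection_apply _ v, map_sub, map_smul, simpleReflection_root_self,
    simpleReflection_apply]
  module

lemma simpleReflection_mul_self (b : B) : M.simpleReflection b * M.simpleReflection b = 1 :=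
  LinearMap.ext fun v => by
    rw [Module.End.mul_apply, simpleReflection_simpleReflection, Module.End.one_apply]

lemma form_single_left (a : B) (x : ℝ) (v : B →₀ ℝ) :
    M.form (Finsupp.single a x) v = x * M.pairing a v := by
  simp [form]

lemma form_root_left (a : B) (v : B →₀ ℝ) : M.form (α a) v = M.pairing a v := by
  simp [form_single_left]

lemma form_symm (v w : B →₀ ℝ) : M.form v w = M.form w v := by
  have : M.form = M.form.flip := by
    refine Finsupp.lhom_ext fun a x => Finsupp.lhom_ext fun b y => ?_
    rw [LinearMap.flip_apply, form_single_left, form_single_left, pairing_single,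
      pairing_single, bilinCoeff_symm]
    ring
  exact LinearMap.congr_fun₂ this v w

lemma form_root_right (b : B) (v : B →₀ ℝ) : M.form v (α b) = M.pairing b v := by
  rw [form_symm, form_root_left]

lemma form_simpleReflection (b : B) (v w : B →₀ ℝ) :
    M.form (M.simpleReflection b v) (M.simpleReflection b w) = M.form v w := by
  simp only [simpleReflection_apply, map_sub, map_smul, LinearMap.sub_apply,
    LinearMap.smul_apply, smul_eq_mul, form_root_left, form_root_right, pairing_root,
    bilinCoeff_self]
  ring

lemma dvd_of_chebSeq_bilinCoeff {i j : B} (hij : i ≠ j) {k : ℕ}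
    (h₀ : chebSeq (M.bilinCoeff i j) (2 * k) = 0)
    (h₁ : chebSeq (M.bilinCoeff i j) (2 * k + 1) = 1) : M i j ∣ k := by
  rcases Nat.eq_zero_or_pos (M i j) with hM | hM
  · rw [bilinCoeff_of_eq_zero hM, chebSeq_neg_two] at h₀
    rw [hM, zero_dvd_iff]
    have : 2 * k = 0 := by exact_mod_cast h₀
    omega
  have hm : 2 ≤ M i j := by have := M.off_diagonal i j hij; omega
  set φ := Real.pi / M i j with hφ
  have s₀ := chebSeq_mul_sin φ (2 * k)
  have s₁ := chebSeq_mul_sin φ (2 * k + 1)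
  rw [← bilinCoeff, h₀, zero_mul] at s₀
  rw [← bilinCoeff, h₁, one_mul, Nat.cast_succ, add_mul, one_mul, Real.sin_add, ← s₀,
    zero_mul, zero_add] at s₁
  have hcos : Real.cos ((2 * k : ℕ) * φ) = 1 :=
    (mul_right_cancel₀ (sin_pi_div_pos hm).ne' (s₁.symm.trans (one_mul _).symm))
  obtain ⟨n, hn⟩ := (Real.cos_eq_one_iff _).1 hcos
  have hk : (k : ℝ) = M i j * n := by
    have : (M i j : ℝ) ≠ 0 := by positivity
    rw [hφ] at hn
    push_cast at hn
    field_simp at hn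
    linear_combination -hn
  exact Int.natCast_dvd_natCast.mp ⟨n, by exact_mod_cast hk⟩

lemma chebSeq_bilinCoeff_nonneg {i j : B} (hij : i ≠ j) {k : ℕ} (hk : M i j = 0 ∨ k ≤ M i j) :
    0 ≤ chebSeq (M.bilinCoeff i j) k := by
  by_cases hM : M i j = 0
  · rw [bilinCoeff_of_eq_zero hM, chebSeq_neg_two]
    positivity
  · have := M.off_diagonal i j hij
    exact chebSeq_nonneg (by omega) (hk.resolve_left hM)

lemma wordReflection_cons (b : B) (ω : List B) :
    M.wordReflection (b :: ω) = M.simpleReflection b * M.wordReflection ω := by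
  simp [wordReflection]

lemma wordReflection_alternatingWord_succ (i j : B) (k : ℕ) :
    M.wordReflection (alternatingWord i j (k + 1)) =
      M.simpleReflection (if Even k then j else i) * M.wordReflection (alternatingWord i j k) := by
  rw [alternatingWord_succ', wordReflection_cons]

lemma wordReflection_alternatingWord_root (i j : B) (k : ℕ) :
    M.wordReflection (alternatingWord i j k) (α i) =
      if Even k then
        chebSeq (M.bilinCoeff i j) (k + 1) • α i + chebSeq (M.bilinCoeff i j) k • α j
      else chebSeq (M.bilinCoeff i j) k • α i + chebSeq (M.bilinCoeff i j) (k + 1) • α j := by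
  induction k with
  | zero => simp [wordReflection, alternatingWord, chebSeq]
  | succ k ih =>
    rw [wordReflection_alternatingWord_succ, Module.End.mul_apply, ih]
    rcases Nat.even_or_odd k with hk | hk
    · simp only [hk, Nat.even_add_one, not_true, if_true, if_false, map_add, map_smul,
        simpleReflection_root, bilinCoeff_self, chebSeq_add_two]
      module
    · simp only [Nat.not_even_iff_odd.mpr hk, Nat.even_add_one, not_false_eq_true, if_true,
        if_false, map_add, map_smul, simpleReflection_root, bilinCoeff_self,
        chebSeq_add_two, bilinCoeff_symm j i]
      module

lemma wordReflection_alternatingWord_root_nonneg {i j : B} (hij : i ≠ j) {k : ℕ}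
    (hk : M i j = 0 ∨ k < M i j) : ∃ a b : ℝ, 0 ≤ a ∧ 0 ≤ b ∧
      M.wordReflection (alternatingWord i j k) (α i) = a • α i + b • α j := by
  have h₀ := chebSeq_bilinCoeff_nonneg (M := M) hij (k := k) (by omega)
  have h₁ := chebSeq_bilinCoeff_nonneg (M := M) hij (k := k + 1) (by omega)
  rw [wordReflection_alternatingWord_root]
  split
  · exact ⟨_, _, h₁, h₀, rfl⟩
  · exact ⟨_, _, h₀, h₁, rfl⟩

lemma simpleReflection_mul_pow (i j : B) (r : ℕ) :
    (M.simpleReflection i * M.simpleReflection j) ^ r =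
      M.wordReflection (alternatingWord i j (2 * r)) := by
  induction r with
  | zero => simp [wordReflection, alternatingWord]
  | succ r ih =>
    rw [pow_succ', ih, show 2 * (r + 1) = 2 * r + 1 + 1 by ring,
      wordReflection_alternatingWord_succ, wordReflection_alternatingWord_succ]
    simp [mul_assoc]

lemma simpleReflection_mul_pow_apply_root {i j : B} (hm : 2 ≤ M i j) :
    ((M.simpleReflection i * M.simpleReflection j) ^ M i j) (α i) = α i := by
  rw [simpleReflection_mul_pow, wordReflection_alternatingWord_root, if_pos (even_two_mul _),
    bilinCoeff, chebSeq_two_mul_add_one hm, chebSeq_two_mul hm, one_smul, zero_smul, add_zero]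

lemma eq_one_of_apply_root_of_pairing_eq_zero {i j : B} (hc : M.bilinCoeff i j ^ 2 ≠ 4)
    {T : Module.End ℝ (B →₀ ℝ)} (hi : T (α i) = α i) (hj : T (α j) = α j)
    (hperp : ∀ v, M.pairing i v = 0 → M.pairing j v = 0 → T v = v) : T = 1 := by
  have hc : 4 - M.bilinCoeff i j ^ 2 ≠ 0 := sub_ne_zero.2 hc.symm
  refine LinearMap.ext fun v => ?_
  set x := (2 * M.pairing i v - M.bilinCoeff i j * M.pairing j v) / (4 - M.bilinCoeff i j ^ 2)
  set y := (2 * M.pairing j v - M.bilinCoeff i j * M.pairing i v) / (4 - M.bilinCoeff i j ^ 2)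
  set v' := v - x • α i - y • α j
  have hvi : M.pairing i v' = 0 := by
    simp only [v', x, y, map_sub, map_smul, pairing_root, bilinCoeff_self, bilinCoeff_symm j i]
    linear_combination (-M.pairing i v) * mul_inv_cancel₀ hc
  have hvj : M.pairing j v' = 0 := by
    simp only [v', x, y, map_sub, map_smul, pairing_root, bilinCoeff_self]
    linear_combination (-M.pairing j v) * mul_inv_cancel₀ hc
  have hv : v = v' + x • α i + y • α j := by simp only [v']; abel
  rw [hv, map_add, map_add, map_smul, map_smul, hperp v' hvi hvj, hi, hj, Module.End.one_apply]

lemma simpleReflection_mul_pow_eq_one (i j : B) :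
    (M.simpleReflection i * M.simpleReflection j) ^ M i j = 1 := by
  by_cases hij : i = j
  · rw [hij, M.diagonal, pow_one, simpleReflection_mul_self]
  by_cases hM : M i j = 0
  · rw [hM, pow_zero]
  have hm : 2 ≤ M i j := by have := M.off_diagonal i j hij; omega
  refine eq_one_of_apply_root_of_pairing_eq_zero (bilinCoeff_sq_lt_four hm).ne
    (simpleReflection_mul_pow_apply_root hm) ?_ fun v hvi hvj => ?_
  · -- `(sⱼ sᵢ)^m` fixes `αⱼ` and is inverse to `(sᵢ sⱼ)^m`
    have h := simpleReflection_mul_pow_apply_root (M := M) (i := j) (j := i) (M.symmetric i j ▸ hm)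
    rw [M.symmetric] at h
    conv_lhs => rw [← h, ← Module.End.mul_apply, mul_pow_mul_mul_pow_eq_one
      (simpleReflection_mul_self i) (simpleReflection_mul_self j), Module.End.one_apply]
  · rw [Module.End.pow_apply]
    refine Function.iterate_fixed ?_ _
    rw [Module.End.mul_apply, simpleReflection_apply _ v, hvj, zero_smul, sub_zero,
      simpleReflection_apply, hvi, zero_smul, sub_zero]

lemma isLiftable_simpleReflection : M.IsLiftable M.simpleReflection :=
  simpleReflection_mul_pow_eq_one

lemma eq_smul_root_of_nonneg {Q : B →₀ ℝ} {i : B} (hQ : 0 ≤ Q)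
    (hsQ : M.simpleReflection i Q ≤ 0) : Q = Q i • α i := by
  ext b
  rcases eq_or_ne b i with rfl | hb
  · simp
  · have h := hsQ b
    simp only [simpleReflection_apply, Finsupp.sub_apply, Finsupp.smul_apply,
      Finsupp.single_eq_of_ne hb, smul_zero, sub_zero, Finsupp.coe_zero, Pi.zero_apply] at h
    simp [Finsupp.single_eq_of_ne hb, le_antisymm h (hQ b)]

variable {σ : B → B}

lemma rootPerm_single (b : B) (x : ℝ) :
    rootPerm σ (Finsupp.single b x) = Finsupp.single (σ b) x := by
  simp [rootPerm]

lemma pairing_rootPerm (hM : ∀ a b, M (σ a) (σ b) = M a b) (b : B) (v : B →₀ ℝ) :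
    M.pairing (σ b) (rootPerm σ v) = M.pairing b v := by
  induction v using Finsupp.induction_linear with
  | zero => simp
  | add v v' hv hv' => rw [map_add, map_add, hv, hv', map_add]
  | single a x => rw [rootPerm_single, pairing_single, pairing_single, bilinCoeff, bilinCoeff, hM]

lemma form_rootPerm (hM : ∀ a b, M (σ a) (σ b) = M a b) (v w : B →₀ ℝ) :
    M.form (rootPerm σ v) (rootPerm σ w) = M.form v w := by
  induction v using Finsupp.induction_linear with
  | zero => simp
  | add v v' hv hv' => simp only [map_add, LinearMap.add_apply, hv, hv']
  | single a x => rw [rootPerm_single, form_single_left, form_single_left, pairing_rootPerm hM]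

lemma rootPerm_simpleReflection (hM : ∀ a b, M (σ a) (σ b) = M a b) (b : B) (v : B →₀ ℝ) :
    rootPerm σ (M.simpleReflection b v) = M.simpleReflection (σ b) (rootPerm σ v) := by
  rw [simpleReflection_apply, simpleReflection_apply, map_sub, map_smul, rootPerm_single,
    pairing_rootPerm hM]

end CoxeterMatrix

namespace CoxeterSystem

open CoxeterMatrix

variable (cs : CoxeterSystem M W)

def geomRep : W →* Module.End ℝ (B →₀ ℝ) :=
  cs.lift ⟨M.simpleReflection, isLiftable_simpleReflection⟩

lemma geomRep_simple (i : B) : cs.geomRep (cs.simple i) = M.simpleReflection i :=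
  cs.lift_apply_simple isLiftable_simpleReflection i

lemma geomRep_wordProd (ω : List B) : cs.geomRep (cs.wordProd ω) = M.wordReflection ω := by
  simp only [wordProd, wordReflection, map_list_prod, List.map_map]
  congr 1
  exact List.map_congr_left fun i _ => cs.geomRep_simple i

lemma geomRep_apply_inv_apply (w : W) (v : B →₀ ℝ) : cs.geomRep w (cs.geomRep w⁻¹ v) = v := by
  simp only [← Module.End.mul_apply, ← map_mul, mul_inv_cancel, map_one, Module.End.one_apply]

lemma form_geomRep (w : W) (v v' : B →₀ ℝ) :
    M.form (cs.geomRep w v) (cs.geomRep w v') = M.form v v' := by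
  induction w using cs.simple_induction generalizing v v' with
  | simple i => rw [geomRep_simple, form_simpleReflection]
  | one => simp
  | mul w w' ih ih' => rw [map_mul, Module.End.mul_apply, Module.End.mul_apply, ih, ih']

lemma simple_mul_simple_pow_eq_one_iff (i j : B) (k : ℕ) :
    (cs.simple i * cs.simple j) ^ k = 1 ↔ M i j ∣ k := by
  refine ⟨fun h => ?_, fun ⟨t, ht⟩ => by rw [ht, pow_mul, simple_mul_simple_pow, one_pow]⟩
  by_cases hij : i = j
  · rw [hij, M.diagonal]
    exact one_dvd k
  have h' := congrArg (fun g => cs.geomRep g (α i)) h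
  simp only [map_pow, map_mul, geomRep_simple, map_one, Module.End.one_apply,
    simpleReflection_mul_pow, wordReflection_alternatingWord_root, if_pos (even_two_mul k)] at h'
  apply M.dvd_of_chebSeq_bilinCoeff hij
  · simpa [Finsupp.single_apply, hij] using congrArg (· j) h'
  · simpa [Finsupp.single_apply, hij, Ne.symm hij] using congrArg (· i) h'

lemma simple_injective : Function.Injective cs.simple := by
  intro i j h
  by_contra hij
  have := (cs.simple_mul_simple_pow_eq_one_iff i j 1).1 (by rw [pow_one, h, simple_mul_simple_self])
  exact M.off_diagonal i j hij (Nat.dvd_one.1 this)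

/-- `ω` is the end of some reduced word for `w`. -/
def HasReducedSuffix (w : W) (ω : List B) : Prop :=
  cs.length (w * (cs.wordProd ω)⁻¹) + ω.length = cs.length w

variable {cs}

lemma HasReducedSuffix.length_le {w : W} {ω : List B} (h : cs.HasReducedSuffix w ω) :
    ω.length ≤ cs.length w := by
  unfold HasReducedSuffix at h
  omega

lemma length_le_length_mul_wordProd_inv_add (w : W) (ω : List B) :
    cs.length w ≤ cs.length (w * (cs.wordProd ω)⁻¹) + ω.length := by
  calc cs.length w = cs.length (w * (cs.wordProd ω)⁻¹ * cs.wordProd ω) := by group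
    _ ≤ _ := (cs.length_mul_le _ _).trans (by gcongr; exact cs.length_wordProd_le ω)

lemma mul_wordProd_cons_inv (w : W) (b : B) (ω : List B) :
    w * (cs.wordProd (b :: ω))⁻¹ = w * (cs.wordProd ω)⁻¹ * cs.simple b := by
  rw [wordProd_cons, mul_inv_rev, inv_simple, mul_assoc]

lemma HasReducedSuffix.cons_iff {w : W} {b : B} {ω : List B} (h : cs.HasReducedSuffix w ω) :
    cs.HasReducedSuffix w (b :: ω) ↔ cs.IsRightDescent (w * (cs.wordProd ω)⁻¹) b := by
  unfold HasReducedSuffix at h ⊢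
  rw [mul_wordProd_cons_inv, isRightDescent_iff, List.length_cons]
  constructor <;> intro <;> omega

lemma HasReducedSuffix.of_cons {w : W} {b : B} {ω : List B}
    (h : cs.HasReducedSuffix w (b :: ω)) : cs.HasReducedSuffix w ω := by
  have h₁ := length_le_length_mul_wordProd_inv_add (cs := cs) w ω
  have h₂ := cs.length_mul_simple (w * (cs.wordProd ω)⁻¹) b
  unfold HasReducedSuffix at h ⊢
  rw [mul_wordProd_cons_inv, List.length_cons] at h
  omega

lemma HasReducedSuffix.not_isRightDescent {w : W} {b : B} {ω : List B}
    (h : cs.HasReducedSuffix w (b :: ω)) :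
    ¬ cs.IsRightDescent (w * (cs.wordProd (b :: ω))⁻¹) b := by
  have h₁ := length_le_length_mul_wordProd_inv_add (cs := cs) w ω
  have h₂ := cs.length_mul_simple (w * (cs.wordProd ω)⁻¹) b
  unfold HasReducedSuffix at h
  rw [not_isRightDescent_iff, mul_wordProd_cons_inv, simple_mul_simple_cancel_right]
  rw [mul_wordProd_cons_inv, List.length_cons] at h
  omega

lemma hasReducedSuffix_singleton_iff {w : W} {i : B} :
    cs.HasReducedSuffix w [i] ↔ cs.IsRightDescent w i := by
  simp [HasReducedSuffix, isRightDescent_iff, inv_simple]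

lemma HasReducedSuffix.alternatingWord_of_le {w : W} {i j : B} {a b : ℕ} (hab : a ≤ b)
    (h : cs.HasReducedSuffix w (alternatingWord i j b)) :
    cs.HasReducedSuffix w (alternatingWord i j a) := by
  induction b, hab using Nat.le_induction with
  | base => exact h
  | succ b _ ih => exact ih (by rw [alternatingWord_succ'] at h; exact h.of_cons)

lemma HasReducedSuffix.isRightDescent_of_braid {w : W} {i j : B} (hM : M i j ≠ 0)
    (h : cs.HasReducedSuffix w (alternatingWord i j (M i j))) : cs.IsRightDescent w i := by
  have h' : cs.HasReducedSuffix w (alternatingWord j i (M j i)) := by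
    have e : cs.wordProd (alternatingWord j i (M j i)) =
        cs.wordProd (alternatingWord i j (M i j)) := cs.wordProd_braidWord_eq j i
    unfold HasReducedSuffix at h ⊢
    rw [e, length_alternatingWord, M.symmetric j i]
    rwa [length_alternatingWord] at h
  rw [← hasReducedSuffix_singleton_iff]
  exact h'.alternatingWord_of_le (b := M j i) (a := 1) (by rw [M.symmetric]; omega)

/-- The factorization `w = v · (⋯ sᵢ sⱼ)` with `ℓ(w) = ℓ(v) + k` and `k` maximal
(Humphreys, *Reflection groups and Coxeter groups*, §5.4). -/
lemma exists_mul_alternatingWord {w : W} {i j : B} (hi : ¬ cs.IsRightDescent w i)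
    (hj : cs.IsRightDescent w j) :
    ∃ v : W, ∃ k : ℕ, w = v * cs.wordProd (alternatingWord i j k) ∧ cs.length v < cs.length w ∧
      ¬ cs.IsRightDescent v i ∧ ¬ cs.IsRightDescent v j ∧ (M i j = 0 ∨ k < M i j) := by
  let P k := cs.HasReducedSuffix w (alternatingWord i j k)
  have hP₁ : P 1 := by
    simpa [P, alternatingWord, hasReducedSuffix_singleton_iff] using hj
  have hℓ : 1 ≤ cs.length w := hP₁.length_le.trans_eq' (by simp [alternatingWord])
  set k := Nat.findGreatest P (cs.length w)
  have hPk : P k := Nat.findGreatest_spec hℓ hP₁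
  obtain ⟨k', hk'⟩ : ∃ k', k = k' + 1 := ⟨k - 1, by have := Nat.le_findGreatest hℓ hP₁; omega⟩
  have hPk₁ : ¬ P (k + 1) := fun h =>
    Nat.findGreatest_is_greatest (Nat.lt_succ_self k) (by simpa using h.length_le) h
  set v := w * (cs.wordProd (alternatingWord i j k))⁻¹
  refine ⟨v, k, by simp [v], ?_, ?_⟩
  · have := hPk
    simp only [P, HasReducedSuffix, length_alternatingWord] at this
    simp only [v]
    omega
  have hnext : ¬ cs.IsRightDescent v (if Even (k' + 1) then j else i) := by
    rwa [← hk', ← hPk.cons_iff, ← alternatingWord_succ']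
  have hprev : ¬ cs.IsRightDescent v (if Even k' then j else i) := by
    have := hPk
    simp only [v, P, hk', alternatingWord_succ'] at this ⊢
    exact this.not_isRightDescent
  have hbound : M i j = 0 ∨ k < M i j := by
    by_contra! hcon
    exact hi (HasReducedSuffix.isRightDescent_of_braid hcon.1
      (hPk.alternatingWord_of_le (by omega)))
  obtain ⟨hvi, hvj⟩ := ite_even_and (p := (¬ cs.IsRightDescent v ·)) hnext hprev
  exact ⟨hvi, hvj, hbound⟩

theorem geomRep_root_nonneg {w : W} {i : B} (h : ¬ cs.IsRightDescent w i) :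
    0 ≤ cs.geomRep w (α i) := by
  induction hn : cs.length w using Nat.strong_induction_on generalizing w i with
  | _ n ih =>
  rcases eq_or_ne w 1 with rfl | hw
  · simp
  obtain ⟨j, hj⟩ := cs.exists_rightDescent_of_ne_one hw
  have hij : i ≠ j := by rintro rfl; exact h hj
  obtain ⟨v, k, rfl, hlt, hvi, hvj, hk⟩ := exists_mul_alternatingWord h hj
  obtain ⟨a, b, ha, hb, hab⟩ := M.wordReflection_alternatingWord_root_nonneg hij hk
  rw [map_mul, Module.End.mul_apply, geomRep_wordProd, hab, map_add, map_smul, map_smul]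
  exact add_nonneg (smul_nonneg ha (ih _ (hn ▸ hlt) hvi rfl))
    (smul_nonneg hb (ih _ (hn ▸ hlt) hvj rfl))

lemma geomRep_root_nonpos {w : W} {i : B} (h : cs.IsRightDescent w i) :
    cs.geomRep w (α i) ≤ 0 := by
  have := geomRep_root_nonneg (cs.isRightDescent_iff_not_isRightDescent_mul.1 h)
  rwa [map_mul, Module.End.mul_apply, geomRep_simple, simpleReflection_root_self, map_neg,
    neg_nonneg] at this

variable (cs) in
lemma geomRep_injective : Function.Injective cs.geomRep := by
  refine (injective_iff_map_eq_one _).2 fun g hg => ?_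
  by_contra hne
  obtain ⟨j, hj⟩ := cs.exists_rightDescent_of_ne_one hne
  have := geomRep_root_nonpos hj j
  norm_num [hg] at this

variable (cs) in
lemma geomRep_conj_apply (u : W) (i : B) (v : B →₀ ℝ) :
    cs.geomRep (u * cs.simple i * u⁻¹) v =
      v - M.form (cs.geomRep u (α i)) v • cs.geomRep u (α i) := by
  have h := cs.form_geomRep u (α i) (cs.geomRep u⁻¹ v)
  rw [geomRep_apply_inv_apply, form_root_left] at h
  rw [map_mul, map_mul, Module.End.mul_apply, Module.End.mul_apply, geomRep_simple,
    simpleReflection_apply, map_sub, map_smul, geomRep_apply_inv_apply, h]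

lemma mul_self_eq_one_of_geomRep_root_eq_smul {u : W} {i j : B} {c : ℝ}
    (h : cs.geomRep u (α i) = c • α j) : c * c = 1 := by
  have := cs.form_geomRep u (α i) (α i)
  simp only [h, map_smul, LinearMap.smul_apply, form_root_left, pairing_root, bilinCoeff_self,
    smul_eq_mul] at this
  linarith

lemma conj_eq_simple_of_geomRep_root_eq_smul {u : W} {i j : B} {c : ℝ}
    (h : cs.geomRep u (α i) = c • α j) : u * cs.simple i * u⁻¹ = cs.simple j := by
  have hc := mul_self_eq_one_of_geomRep_root_eq_smul h
  refine geomRep_injective cs (LinearMap.ext fun v => ?_)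
  rw [geomRep_conj_apply, h, geomRep_simple, simpleReflection_apply, map_smul,
    LinearMap.smul_apply, form_root_left, smul_smul, smul_eq_mul, mul_comm, ← mul_assoc, hc,
    one_mul]

lemma geomRep_root_eq_of_conj_eq_simple {u : W} {i j : B}
    (hconj : u * cs.simple i * u⁻¹ = cs.simple j) (hi : ¬ cs.IsRightDescent u i) :
    cs.geomRep u (α i) = α j := by
  set β := cs.geomRep u (α i)
  set d := M.form β (α j)
  have hdβ : d • β = (2 : ℝ) • α j := by
    have e := congrArg (fun g => cs.geomRep g (α j)) hconj
    simp only [geomRep_conj_apply, geomRep_simple, simpleReflection_root_self] at e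
    calc d • β = α j - (α j - d • β) := by abel
      _ = (2 : ℝ) • α j := by rw [e]; module
  have hd : d ≠ 0 := by
    rintro hd
    have := congrArg (· j) hdβ
    simp [hd] at this
  have hβ : β = (2 / d) • α j := by
    rw [div_eq_inv_mul, ← smul_smul, ← hdβ, smul_smul, inv_mul_cancel₀ hd, one_smul]
  have hc := mul_self_eq_one_of_geomRep_root_eq_smul hβ
  have hnonneg : 0 ≤ 2 / d := by
    have h := geomRep_root_nonneg hi j
    change 0 ≤ β j at h
    simpa [hβ] using h
  rw [hβ, show 2 / d = 1 by nlinarith, one_smul]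

/-- If `ℓ(sⱼ w sᵢ) ≠ ℓ(w) + 2`, then `sᵢ` sends `π(w⁻¹) αⱼ ≥ 0` to a vector `≤ 0`, so it is a
multiple of `αᵢ` and `w⁻¹ sⱼ w = sᵢ`. -/
lemma length_simple_mul_mul_simple {w : W} {i j : B} (hi : ¬ cs.IsRightDescent w i)
    (hj : ¬ cs.IsLeftDescent w j) (hne : cs.simple j * w ≠ w * cs.simple i) :
    cs.length (cs.simple j * w * cs.simple i) = cs.length w + 2 := by
  have h₁ := cs.not_isRightDescent_iff.1 hi
  rcases cs.length_simple_mul (w * cs.simple i) j with h | h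
  · rwa [← mul_assoc, h₁] at h
  have hd : cs.IsRightDescent (w * cs.simple i)⁻¹ j :=
    cs.isLeftDescent_inv_iff.1 (by rw [inv_inv, IsLeftDescent]; omega)
  have hQ : 0 ≤ cs.geomRep w⁻¹ (α j) :=
    geomRep_root_nonneg (by rwa [← cs.isLeftDescent_inv_iff, inv_inv])
  have hsQ : M.simpleReflection i (cs.geomRep w⁻¹ (α j)) ≤ 0 := by
    simpa [mul_inv_rev, inv_simple, geomRep_simple] using geomRep_root_nonpos hd
  have := conj_eq_simple_of_geomRep_root_eq_smul (eq_smul_root_of_nonneg hQ hsQ)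
  exact absurd (by rw [← this]; group) hne

lemma length_simple_mul_mul_simple_add_two {w : W} {i j : B} (hi : cs.IsRightDescent w i)
    (hj : cs.IsLeftDescent w j) (hne : cs.simple j * w ≠ w * cs.simple i) :
    cs.length (cs.simple j * w * cs.simple i) + 2 = cs.length w := by
  have h₁ := cs.isRightDescent_iff.1 hi
  have hj' := hj
  rw [IsLeftDescent] at hj'
  by_contra hℓ
  have h₂ : ¬ cs.IsLeftDescent (w * cs.simple i) j := by
    rcases cs.length_simple_mul (w * cs.simple i) j with h | h
    · rw [not_isLeftDescent_iff, h]
    · rw [← mul_assoc] at h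
      omega
  have := length_simple_mul_mul_simple (w := w * cs.simple i) (i := i) (j := j)
    (by rw [not_isRightDescent_iff, simple_mul_simple_cancel_right]; omega) h₂
    (fun h => hne (by
      rw [simple_mul_simple_cancel_right, ← mul_assoc] at h
      rw [← cs.simple_mul_simple_cancel_right (w := cs.simple j * w) i, h]))
  rw [← mul_assoc, simple_mul_simple_cancel_right] at this
  omega

variable (cs) {θ : W ≃* W} {σ : B → B}

lemma involutive_of_map_simple (hθ : ∀ w : W, θ (θ w) = w)
    (hσ : ∀ i : B, θ (cs.simple i) = cs.simple (σ i)) : Function.Involutive σ :=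
  fun i => cs.simple_injective (by rw [← hσ, ← hσ, hθ])

lemma coxeterMatrix_apply_of_map_simple (hσ : ∀ i : B, θ (cs.simple i) = cs.simple (σ i))
    (i j : B) : M (σ i) (σ j) = M i j := by
  have key (k : ℕ) : M (σ i) (σ j) ∣ k ↔ M i j ∣ k := by
    rw [← cs.simple_mul_simple_pow_eq_one_iff, ← cs.simple_mul_simple_pow_eq_one_iff, ← hσ, ← hσ,
      ← map_mul, ← map_pow, MulEquiv.map_eq_one_iff]
  exact Nat.dvd_antisymm ((key _).2 dvd_rfl) ((key _).1 dvd_rfl)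

lemma length_map_le (hσ : ∀ i : B, θ (cs.simple i) = cs.simple (σ i)) (w : W) :
    cs.length (θ w) ≤ cs.length w := by
  obtain ⟨ω, hω, rfl⟩ := cs.exists_isReduced w
  have : θ (cs.wordProd ω) = cs.wordProd (ω.map σ) := by
    simp only [wordProd, map_list_prod, List.map_map]
    exact congrArg List.prod (List.map_congr_left fun i _ => hσ i)
  rw [this, hω.eq]
  exact (cs.length_wordProd_le _).trans_eq (List.length_map _)

lemma length_map (hθ : ∀ w : W, θ (θ w) = w)
    (hσ : ∀ i : B, θ (cs.simple i) = cs.simple (σ i)) (w : W) :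
    cs.length (θ w) = cs.length w :=
  (cs.length_map_le hσ w).antisymm (by simpa [hθ] using cs.length_map_le hσ (θ w))

end CoxeterSystem

section TwistedInvolution

open CoxeterSystem

variable (cs : CoxeterSystem M W) {θ : W ≃* W} {σ : B → B}

lemma theta_simple_mul_mul_simple_eq_iff {w : W} {i : B} :
    θ (cs.simple i) * w * cs.simple i = w ↔ θ (cs.simple i) * w = w * cs.simple i := by
  rw [← eq_mul_inv_iff_mul_eq, inv_simple]

lemma twMul_of_eq {w : W} {i : B} (h : θ (cs.simple i) * w * cs.simple i = w) :
    twMul cs θ w i = w * cs.simple i :=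
  if_pos h

lemma twMul_of_ne {w : W} {i : B} (h : θ (cs.simple i) * w * cs.simple i ≠ w) :
    twMul cs θ w i = θ (cs.simple i) * w * cs.simple i :=
  if_neg h

lemma twMul_twMul (w : W) (i : B) : twMul cs θ (twMul cs θ w i) i = w := by
  have ht : θ (cs.simple i) * θ (cs.simple i) = 1 := by
    rw [← map_mul, simple_mul_simple_self, map_one]
  by_cases h : θ (cs.simple i) * w * cs.simple i = w
  · have h' := (theta_simple_mul_mul_simple_eq_iff cs).1 h
    rw [twMul_of_eq cs h, twMul_of_eq cs (by rw [← mul_assoc, h', simple_mul_simple_cancel_right]),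
      simple_mul_simple_cancel_right]
  · have hback : θ (cs.simple i) * (θ (cs.simple i) * w * cs.simple i) * cs.simple i = w := by
      rw [← mul_assoc, ← mul_assoc, ht, one_mul, simple_mul_simple_cancel_right]
    rw [twMul_of_ne cs h, twMul_of_ne cs (by rw [hback]; exact Ne.symm h), hback]

lemma twMul_mem_twistedInvolutions (hθ : ∀ w : W, θ (θ w) = w) {w : W}
    (hw : w ∈ TwistedInvolutions θ) (i : B) : twMul cs θ w i ∈ TwistedInvolutions θ := by
  have hw' : θ w = w⁻¹ := hw
  have ht : (θ (cs.simple i))⁻¹ = θ (cs.simple i) := by rw [← map_inv, inv_simple]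
  show θ _ = _⁻¹
  by_cases h : θ (cs.simple i) * w * cs.simple i = w
  · have h' := (theta_simple_mul_mul_simple_eq_iff cs).1 h
    rw [twMul_of_eq cs h, map_mul, hw', mul_inv_rev, inv_simple]
    calc w⁻¹ * θ (cs.simple i) = w⁻¹ * (θ (cs.simple i) * w) * w⁻¹ := by group
      _ = cs.simple i * w⁻¹ := by rw [h']; group
  · rw [twMul_of_ne cs h, map_mul, map_mul, hθ, hw', mul_inv_rev, mul_inv_rev, inv_simple, ht,
      mul_assoc]

lemma twWord_append_singleton (w : W) (ω : List B) (i : B) :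
    twWord cs θ w (ω ++ [i]) = twMul cs θ (twWord cs θ w ω) i := by
  simp [twWord]

lemma twWord_mem_twistedInvolutions (hθ : ∀ w : W, θ (θ w) = w) (ω : List B) :
    twWord cs θ 1 ω ∈ TwistedInvolutions θ := by
  induction ω using List.reverseRecOn with
  | nil => simp [twWord, TwistedInvolutions]
  | append_singleton ω i ih =>
    rw [twWord_append_singleton]
    exact twMul_mem_twistedInvolutions cs hθ ih i

lemma length_simple_mul_of_mem (hθ : ∀ w : W, θ (θ w) = w)
    (hσ : ∀ i : B, θ (cs.simple i) = cs.simple (σ i)) {w : W}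
    (hw : w ∈ TwistedInvolutions θ) (i : B) :
    cs.length (cs.simple (σ i) * w) = cs.length (w * cs.simple i) := by
  have hw' : θ w = w⁻¹ := hw
  rw [← cs.length_inv, mul_inv_rev, inv_simple, ← hw', ← hσ, ← map_mul,
    cs.length_map hθ hσ]

lemma isLeftDescent_iff_isRightDescent_of_mem (hθ : ∀ w : W, θ (θ w) = w)
    (hσ : ∀ i : B, θ (cs.simple i) = cs.simple (σ i)) {w : W}
    (hw : w ∈ TwistedInvolutions θ) (i : B) :
    cs.IsLeftDescent w (σ i) ↔ cs.IsRightDescent w i := by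
  rw [IsLeftDescent, IsRightDescent, length_simple_mul_of_mem cs hθ hσ hw]

lemma length_theta_simple_mul_mul_simple (hθ : ∀ w : W, θ (θ w) = w)
    (hσ : ∀ i : B, θ (cs.simple i) = cs.simple (σ i)) {w : W}
    (hw : w ∈ TwistedInvolutions θ) {i : B} (hne : θ (cs.simple i) * w * cs.simple i ≠ w)
    (hi : ¬ cs.IsRightDescent w i) :
    cs.length (θ (cs.simple i) * w * cs.simple i) = cs.length w + 2 := by
  rw [ne_eq, theta_simple_mul_mul_simple_eq_iff, hσ] at hne
  rw [hσ]
  exact length_simple_mul_mul_simple hi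
    (by rwa [isLeftDescent_iff_isRightDescent_of_mem cs hθ hσ hw]) hne

lemma length_theta_simple_mul_mul_simple_add_two (hθ : ∀ w : W, θ (θ w) = w)
    (hσ : ∀ i : B, θ (cs.simple i) = cs.simple (σ i)) {w : W}
    (hw : w ∈ TwistedInvolutions θ) {i : B} (hne : θ (cs.simple i) * w * cs.simple i ≠ w)
    (hi : cs.IsRightDescent w i) :
    cs.length (θ (cs.simple i) * w * cs.simple i) + 2 = cs.length w := by
  rw [ne_eq, theta_simple_mul_mul_simple_eq_iff, hσ] at hne
  rw [hσ]
  exact length_simple_mul_mul_simple_add_two hi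
    (by rwa [isLeftDescent_iff_isRightDescent_of_mem cs hθ hσ hw]) hne

lemma exists_twWord_eq (hθ : ∀ w : W, θ (θ w) = w)
    (hσ : ∀ i : B, θ (cs.simple i) = cs.simple (σ i)) {w : W}
    (hw : w ∈ TwistedInvolutions θ) : ∃ ω : List B, twWord cs θ 1 ω = w := by
  induction hn : cs.length w using Nat.strong_induction_on generalizing w with
  | _ n ih =>
  rcases eq_or_ne w 1 with rfl | hne
  · exact ⟨[], rfl⟩
  obtain ⟨i, hi⟩ := cs.exists_rightDescent_of_ne_one hne
  have hlt : cs.length (twMul cs θ w i) < n := by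
    by_cases h : θ (cs.simple i) * w * cs.simple i = w
    · rw [twMul_of_eq cs h, ← hn]
      exact hi
    · have := length_theta_simple_mul_mul_simple_add_two cs hθ hσ hw h hi
      rw [twMul_of_ne cs h]
      omega
  obtain ⟨ω, hω⟩ := ih _ hlt (twMul_mem_twistedInvolutions cs hθ hw i) rfl
  exact ⟨ω ++ [i], by rw [twWord_append_singleton, hω, twMul_twMul]⟩

lemma twRank_le {w : W} {ω : List B} (h : twWord cs θ 1 ω = w) : twRank cs θ w ≤ ω.length :=
  Nat.sInf_le ⟨ω, rfl, h⟩

lemma exists_isReducedS (hθ : ∀ w : W, θ (θ w) = w)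
    (hσ : ∀ i : B, θ (cs.simple i) = cs.simple (σ i)) {w : W}
    (hw : w ∈ TwistedInvolutions θ) : ∃ ω : List B, IsReducedS cs θ ω w := by
  obtain ⟨ω, hω⟩ := exists_twWord_eq cs hθ hσ hw
  obtain ⟨ω', hlen, hω'⟩ := Nat.sInf_mem (⟨ω.length, ω, rfl, hω⟩ :
    {n | ∃ ω : List B, ω.length = n ∧ twWord cs θ 1 ω = w}.Nonempty)
  exact ⟨ω', hω', hlen⟩

end TwistedInvolution

section NegDim

open CoxeterSystem CoxeterMatrix

variable (cs : CoxeterSystem M W) (σ : B → B) (F : Finset B)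

def negEigenspace (u : W) : Submodule ℝ (B →₀ ℝ) :=
  (cs.geomRep u * rootPerm σ).eigenspace (-1)

/-- Cutting the eigenspace down to the span of `α_b`, `b ∈ F`, makes its dimension finite,
whatever the rank of `W`. -/
def negSpace (u : W) : Submodule ℝ (B →₀ ℝ) :=
  negEigenspace cs σ u ⊓ Finsupp.supported ℝ ℝ (F : Set B)

def negDim (u : W) : ℕ := Module.finrank ℝ (negSpace cs σ F u)

instance (u : W) : FiniteDimensional ℝ (negSpace cs σ F u) := by
  have : FiniteDimensional ℝ (Finsupp.supported ℝ ℝ (F : Set B)) := by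
    rw [Finsupp.supported_eq_span_single]
    exact FiniteDimensional.span_of_finite ℝ (F.finite_toSet.image _)
  exact Submodule.finiteDimensional_of_le inf_le_right

variable {cs σ F}

lemma mem_negEigenspace {u : W} {v : B →₀ ℝ} :
    v ∈ negEigenspace cs σ u ↔ cs.geomRep u (rootPerm σ v) = -v := by
  rw [negEigenspace, Module.End.mem_eigenspace_iff, neg_one_smul, Module.End.mul_apply]

lemma negEigenspace_mul_simple (hσ : Function.Involutive σ) (hM : ∀ a b, M (σ a) (σ b) = M a b)
    {u : W} {i : B} (hc : cs.simple (σ i) * u = u * cs.simple i)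
    (hroot : cs.geomRep u (α i) = α (σ i)) :
    negEigenspace cs σ (u * cs.simple i) = negEigenspace cs σ u ⊔ ℝ ∙ α (σ i) := by
  have hA (v : B →₀ ℝ) : cs.geomRep (u * cs.simple i) (rootPerm σ v) =
      M.simpleReflection (σ i) (cs.geomRep u (rootPerm σ v)) := by
    rw [← hc, map_mul, geomRep_simple, Module.End.mul_apply]
  have hα : cs.geomRep u (rootPerm σ (α (σ i))) = α (σ i) := by
    rw [rootPerm_single, hσ i, hroot]
  apply le_antisymm
  · intro v hv
    rw [mem_negEigenspace, hA] at hv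
    have hv' : cs.geomRep u (rootPerm σ v) = -v + M.pairing (σ i) v • α (σ i) := by
      rw [← simpleReflection_simpleReflection (σ i) (cs.geomRep u _), hv, map_neg,
        simpleReflection_apply]
      abel
    refine Submodule.mem_sup.2 ⟨v - (M.pairing (σ i) v / 2) • α (σ i), ?_,
      (M.pairing (σ i) v / 2) • α (σ i),
      Submodule.smul_mem _ _ (Submodule.mem_span_singleton_self _), by abel⟩
    rw [mem_negEigenspace, map_sub, map_smul, map_sub, map_smul, hv', hα]
    module
  · refine sup_le (fun v hv => ?_) ((Submodule.span_singleton_le_iff_mem _ _).2 ?_)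
    · rw [mem_negEigenspace] at hv ⊢
      have horth : M.pairing (σ i) v = 0 := by
        have := form_rootPerm hM (α (σ i)) v
        rw [← cs.form_geomRep u, hα, hv, map_neg, form_root_left] at this
        linarith
      rw [hA, hv, map_neg, simpleReflection_apply, horth, zero_smul, sub_zero]
    · rw [mem_negEigenspace, hA, hα, simpleReflection_root_self]

lemma negDim_mul_simple (hσ : Function.Involutive σ) (hM : ∀ a b, M (σ a) (σ b) = M a b)
    {u : W} {i : B} (hc : cs.simple (σ i) * u = u * cs.simple i)
    (hi : ¬ cs.IsRightDescent u i) (hF : σ i ∈ F) :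
    negDim cs σ F (u * cs.simple i) = negDim cs σ F u + 1 := by
  have hroot := geomRep_root_eq_of_conj_eq_simple (j := σ i) (by rw [← hc]; group) hi
  have hαF : (ℝ ∙ α (σ i)) ≤ Finsupp.supported ℝ ℝ (F : Set B) :=
    (Submodule.span_singleton_le_iff_mem _ _).2 (Finsupp.single_mem_supported ℝ 1 hF)
  have hsplit : negSpace cs σ F (u * cs.simple i) = (ℝ ∙ α (σ i)) ⊔ negSpace cs σ F u := by
    rw [negSpace, negEigenspace_mul_simple hσ hM hc hroot, sup_comm, sup_inf_assoc_of_le _ hαF,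
      negSpace]
  have hdisj : (ℝ ∙ α (σ i)) ⊓ negSpace cs σ F u = ⊥ := by
    refine eq_bot_iff.2 fun x ⟨hx, hxE, _⟩ => ?_
    obtain ⟨c, rfl⟩ := Submodule.mem_span_singleton.1 hx
    rw [SetLike.mem_coe, mem_negEigenspace, map_smul, map_smul, rootPerm_single, hσ i,
      hroot] at hxE
    have := congrArg (· (σ i)) hxE
    simp only [Finsupp.smul_apply, Finsupp.coe_neg, Pi.neg_apply, Finsupp.single_eq_same,
      smul_eq_mul, mul_one] at this
    simp [show c = 0 by linarith]
  have := Submodule.finrank_sup_add_finrank_inf_eq (ℝ ∙ α (σ i)) (negSpace cs σ F u)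
  rw [hdisj, finrank_bot, finrank_span_singleton (by simp)] at this
  rw [negDim, negDim, hsplit]
  omega

lemma mem_negEigenspace_simple_mul_mul_simple (hσ : Function.Involutive σ)
    (hM : ∀ a b, M (σ a) (σ b) = M a b) {u : W} {i : B} {v : B →₀ ℝ} :
    v ∈ negEigenspace cs σ (cs.simple (σ i) * u * cs.simple i) ↔
      M.simpleReflection (σ i) v ∈ negEigenspace cs σ u := by
  have hs : M.simpleReflection i (rootPerm σ v) = rootPerm σ (M.simpleReflection (σ i) v) := by
    rw [rootPerm_simpleReflection hM, hσ i]
  rw [mem_negEigenspace, mem_negEigenspace, map_mul, map_mul, Module.End.mul_apply,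
    Module.End.mul_apply, geomRep_simple, geomRep_simple, hs]
  constructor
  · intro h
    rw [← map_neg, ← h, simpleReflection_simpleReflection]
  · intro h
    rw [h, map_neg, simpleReflection_simpleReflection]

lemma negDim_simple_mul_mul_simple (hσ : Function.Involutive σ)
    (hM : ∀ a b, M (σ a) (σ b) = M a b) (u : W) (i : B) (hF : σ i ∈ F) :
    negDim cs σ F (cs.simple (σ i) * u * cs.simple i) = negDim cs σ F u := by
  let e := LinearEquiv.ofInvolutive (M.simpleReflection (σ i))
    (simpleReflection_simpleReflection (σ i))
  have hα := Finsupp.single_mem_supported ℝ (1 : ℝ) hF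
  have hmap : negSpace cs σ F (cs.simple (σ i) * u * cs.simple i) =
      (negSpace cs σ F u).map (e : Module.End ℝ (B →₀ ℝ)) := by
    ext v
    rw [Submodule.mem_map_equiv, negSpace, negSpace, Submodule.mem_inf, Submodule.mem_inf,
      mem_negEigenspace_simple_mul_mul_simple hσ hM]
    refine and_congr_right fun _ => ⟨fun h => ?_, fun h => ?_⟩
    · exact Submodule.sub_mem _ h (Submodule.smul_mem _ _ hα)
    · rw [← simpleReflection_simpleReflection (σ i) v]
      exact Submodule.sub_mem _ h (Submodule.smul_mem _ _ hα)
  rw [negDim, negDim, hmap, LinearEquiv.finrank_map_eq]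

end NegDim

section Parity

open CoxeterSystem

variable (cs : CoxeterSystem M W) {θ : W ≃* W} {σ : B → B} {F : Finset B}

lemma length_add_negDim_twMul (hθ : ∀ w : W, θ (θ w) = w)
    (hσ : ∀ i : B, θ (cs.simple i) = cs.simple (σ i)) {u : W}
    (hu : u ∈ TwistedInvolutions θ) {i : B} (hF : σ i ∈ F) :
    cs.length (twMul cs θ u i) + negDim cs σ F (twMul cs θ u i) =
        cs.length u + negDim cs σ F u + 2 ∨
      cs.length (twMul cs θ u i) + negDim cs σ F (twMul cs θ u i) + 2 =
        cs.length u + negDim cs σ F u := by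
  have hσσ := cs.involutive_of_map_simple hθ hσ
  have hM := cs.coxeterMatrix_apply_of_map_simple hσ
  by_cases h : θ (cs.simple i) * u * cs.simple i = u
  · have hc : cs.simple (σ i) * u = u * cs.simple i := by
      rw [← hσ, ← theta_simple_mul_mul_simple_eq_iff, h]
    rw [twMul_of_eq cs h]
    by_cases hi : cs.IsRightDescent u i
    · have hc' : cs.simple (σ i) * (u * cs.simple i) = u * cs.simple i * cs.simple i := by
        rw [← mul_assoc, hc]
      have := negDim_mul_simple hσσ hM hc'
        (cs.isRightDescent_iff_not_isRightDescent_mul.1 hi) hF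
      rw [simple_mul_simple_cancel_right] at this
      have := cs.isRightDescent_iff.1 hi
      omega
    · have := negDim_mul_simple hσσ hM hc hi hF
      have := cs.not_isRightDescent_iff.1 hi
      omega
  · rw [twMul_of_ne cs h]
    have hdim := negDim_simple_mul_mul_simple (cs := cs) (F := F) hσσ hM u i hF
    rw [← hσ] at hdim
    by_cases hi : cs.IsRightDescent u i
    · have := length_theta_simple_mul_mul_simple_add_two cs hθ hσ hu h hi
      omega
    · have := length_theta_simple_mul_mul_simple cs hθ hσ hu h hi
      omega

lemma length_add_negDim_twWord_mod_four (hθ : ∀ w : W, θ (θ w) = w)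
    (hσ : ∀ i : B, θ (cs.simple i) = cs.simple (σ i)) (ω : List B) (hF : ∀ b ∈ ω, σ b ∈ F) :
    (cs.length (twWord cs θ 1 ω) + negDim cs σ F (twWord cs θ 1 ω)) % 4 =
      (negDim cs σ F 1 + 2 * ω.length) % 4 := by
  induction ω using List.reverseRecOn with
  | nil => simp [twWord]
  | append_singleton ω i ih =>
    have ih := ih fun b hb => hF b (List.mem_append_left _ hb)
    rw [twWord_append_singleton, List.length_append, List.length_singleton]
    rcases length_add_negDim_twMul cs hθ hσ (twWord_mem_twistedInvolutions cs hθ ω)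
      (hF i (by simp)) with h | h <;> omega

lemma length_mod_two_eq_of_twWord_eq (hθ : ∀ w : W, θ (θ w) = w)
    (hσ : ∀ i : B, θ (cs.simple i) = cs.simple (σ i)) {ω ω' : List B}
    (h : twWord cs θ 1 ω = twWord cs θ 1 ω') : ω.length % 2 = ω'.length % 2 := by
  let F := ((ω ++ ω').map σ).toFinset
  have h₁ := length_add_negDim_twWord_mod_four (F := F) cs hθ hσ ω
    fun b hb => List.mem_toFinset.2 (List.mem_map_of_mem (List.mem_append_left _ hb))
  have h₂ := length_add_negDim_twWord_mod_four (F := F) cs hθ hσ ω'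
    fun b hb => List.mem_toFinset.2 (List.mem_map_of_mem (List.mem_append_right _ hb))
  rw [h] at h₁
  omega

end Parity

end

/-- the rank of `w·ŝ` is `ρ(w) + 1` or `ρ(w) - 1`. -/
theorem twRank_twMul (cs : CoxeterSystem M W) (θ : W ≃* W)
    (hθ : ∀ w : W, θ (θ w) = w) (σ : B → B)
    (hσ : ∀ i : B, θ (cs.simple i) = cs.simple (σ i))
    {w : W} (hw : w ∈ TwistedInvolutions θ) (i : B) :
    twRank cs θ (twMul cs θ w i) = twRank cs θ w + 1 ∨
      twRank cs θ (twMul cs θ w i) + 1 = twRank cs θ w := by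
  obtain ⟨ω, hω, hωlen⟩ := exists_isReducedS cs hθ hσ hw
  obtain ⟨ω', hω', hω'len⟩ :=
    exists_isReducedS cs hθ hσ (twMul_mem_twistedInvolutions cs hθ hw i)
  have hup : twWord cs θ 1 (ω ++ [i]) = twMul cs θ w i := by
    rw [twWord_append_singleton, hω]
  have hdown : twWord cs θ 1 (ω' ++ [i]) = w := by
    rw [twWord_append_singleton, hω', twMul_twMul]
  have h₁ := twRank_le cs hup
  have h₂ := twRank_le cs hdown
  have hparity := length_mod_two_eq_of_twWord_eq cs hθ hσ (hup.trans hω'.symm)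
  simp only [List.length_append, List.length_singleton] at h₁ h₂ hparity
  omega
end

section
/- Let w ∈ 𝕀(θ) and suppose every right descent s of w 'passes through' w, meaning ws = s̃w for some s̃ ∈ S. Then w is the longest element of the finite parabolic subgroup generated by S(w), the set of generators appearing in some (equivalently, any) reduced word for w. Moreover w's right descent set equals S(w). -/
attribute [local instance] Classical.propDecidable
open CoxeterSystem List

variable {B : Type*} {M : CoxeterMatrix B} {W : Type*} [Group W]

/-- The support of `w`: the set of generators occurring in some reduced word for `w`. -/
def supportSet (cs : CoxeterSystem M W) (w : W) : Set B :=
  {i : B | ∃ ω : List B, cs.IsReduced ω ∧ cs.wordProd ω = w ∧ i ∈ ω}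

/-!
Let `N(x)` be the set of reflections occurring an odd number of times in the right inversion
sequence of a word for `x`; the parity representation of `W` on `W × ZMod 2` shows that it does not
depend on the word. On a reduced word the inversion sequence has no repetitions, so `ℓ x = |N(x)|`
and `s i ∈ N(x)` exactly when `i` is a right descent of `x`.

Let `J` be the right descent set of `w`. If `w s = s' w`, comparing `N(w s)` with `N(s' w)` shows
that `N(w)` is stable under conjugation by `s`, hence under `W_J`. Since moreover `s j ∈ N(w)` for
`j ∈ J`, it follows that `N(v) ⊆ N(w)` and `N(w v) ⊆ N(w)` for all `v ∈ W_J`. The first inclusion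
gives `ℓ v ≤ ℓ w` and puts the right descents of `v` in `J`; the second puts the right descents of
the whole coset `w W_J` in `J`, and descending along them forces `w ∈ W_J`. The remaining claims
follow: the letters of a reduced word for an element of `W_J` are its successive descents, and
`W_J` has only finitely many elements of length at most `ℓ w`.
-/

theorem List.finite_setOf_length_le_forall_mem {α : Type*} {S : Set α} (hS : S.Finite) (n : ℕ) :
    {l : List α | l.length ≤ n ∧ ∀ x ∈ l, x ∈ S}.Finite := by
  have := hS.to_subtype
  refine ((List.finite_length_le S n).image (List.map (↑))).subset ?_
  rintro l ⟨hl, hlS⟩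
  lift l to List S using hlS
  exact ⟨l, by simpa using hl, rfl⟩

namespace CoxeterSystem

variable (cs : CoxeterSystem M W)

local prefix:100 "s" => cs.simple
local prefix:100 "π" => cs.wordProd
local prefix:100 "ℓ" => cs.length
local prefix:100 "ris" => cs.rightInvSeq
local prefix:100 "lis" => cs.leftInvSeq

theorem reverse_alternatingWord_two_mul (i j : B) (m : ℕ) :
    (alternatingWord i j (2 * m)).reverse = alternatingWord j i (2 * m) := by
  apply List.ext_getElem (by simp)
  intro k h₁ h₂
  simp only [length_reverse, length_alternatingWord] at h₁
  rw [getElem_reverse, getElem_alternatingWord _ _ _ _ (by simp; omega),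
    getElem_alternatingWord _ _ _ _ (by simpa using h₂)]
  simp only [length_alternatingWord]
  have : Even (2 * m + (2 * m - 1 - k)) ↔ ¬ Even (2 * m + k) := by
    rw [Nat.even_add, Nat.even_add, Nat.even_sub (by omega), Nat.even_sub (by omega)]
    simp [parity_simps]
  by_cases hk : Even (2 * m + k) <;> simp [hk, this]

theorem prod_map_alternatingWord_two_mul {G : Type*} [Monoid G] (f : B → G) (i j : B) (m : ℕ) :
    ((alternatingWord i j (2 * m)).map f).prod = (f i * f j) ^ m := by
  induction m with
  | zero => simp [alternatingWord]
  | succ m ih =>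
    rw [show 2 * (m + 1) = 2 * m + 1 + 1 by ring, alternatingWord_succ', alternatingWord_succ']
    simp [ih, pow_succ', mul_assoc, parity_simps]

theorem leftInvSeq_alternatingWord_two_mul (i j : B) (m : ℕ) :
    lis (alternatingWord i j (2 * m)) =
      (List.range (2 * m)).map fun k => s i * (s j * s i) ^ k := by
  apply List.ext_getElem (by simp)
  intro k h₁ h₂
  rw [getElem_leftInvSeq_alternatingWord cs i j m k (by simpa using h₁),
    prod_alternatingWord_eq_mul_pow]
  simp [parity_simps, Nat.add_div_of_dvd_right]

/-- This inversion sequence is periodic with period `M i j`, so each entry occurs an even number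
of times. -/
theorem even_count_rightInvSeq_braidWord (i j : B) (t : W) :
    Even ((ris (alternatingWord i j (2 * M i j))).count t) := by
  rw [← reverse_alternatingWord_two_mul, rightInvSeq_reverse, count_reverse,
    leftInvSeq_alternatingWord_two_mul, two_mul, range_add, map_append]
  have hperiod :
      (fun k => s j * (s i * s j) ^ k) ∘ (M i j + ·) = fun k => s j * (s i * s j) ^ k := by
    funext k
    simp [pow_add, simple_mul_simple_pow]
  rw [map_map, hperiod, count_append]
  exact ⟨_, rfl⟩

/-- Humphreys, *Reflection groups and Coxeter groups*, §5.8. -/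
noncomputable def parityPerm (i : B) : Equiv.Perm (W × ZMod 2) :=
  Function.Involutive.toPerm (fun p => (s i * p.1 * s i, p.2 + if p.1 = s i then 1 else 0)) <| by
    rintro ⟨t, e⟩
    have hconj : s i * t * s i = s i ↔ t = s i := by
      constructor
      · intro h
        simpa [mul_assoc] using congrArg (fun x => s i * x * s i) h
      · rintro rfl
        simp
    refine Prod.ext (by simp [mul_assoc]) ?_
    by_cases ht : t = s i
    · simp [ht, add_assoc, CharTwo.add_self_eq_zero]
    · simp only [ht, hconj, if_false, add_zero]

theorem parityPerm_apply (i : B) (t : W) (e : ZMod 2) :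
    cs.parityPerm i (t, e) = (s i * t * s i, e + if t = s i then 1 else 0) := rfl

theorem prod_map_parityPerm_apply (ω : List B) (t : W) (e : ZMod 2) :
    (ω.map cs.parityPerm).prod (t, e) = (π ω * t * (π ω)⁻¹, e + (ris ω).count t) := by
  induction ω generalizing t e with
  | nil => simp
  | cons i ω ih =>
    have hcond : π ω * t * (π ω)⁻¹ = s i ↔ (π ω)⁻¹ * s i * π ω = t := by
      constructor
      · intro h; rw [← h]; group
      · intro h; rw [← h]; group
    rw [map_cons, prod_cons, Equiv.Perm.mul_apply, ih, parityPerm_apply]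
    refine Prod.ext ?_ ?_
    · simp [wordProd_cons, mul_assoc]
    · simp only [hcond, rightInvSeq, count_cons, beq_iff_eq]
      push_cast
      ring

theorem isLiftable_parityPerm : M.IsLiftable cs.parityPerm := by
  intro i j
  ext ⟨t, e⟩ : 1
  rw [← prod_map_alternatingWord_two_mul, prod_map_parityPerm_apply,
    prod_alternatingWord_eq_mul_pow]
  obtain ⟨k, hk⟩ := cs.even_count_rightInvSeq_braidWord i j t
  simp [hk, simple_mul_simple_pow, CharTwo.add_self_eq_zero]

noncomputable def parityRep : W →* Equiv.Perm (W × ZMod 2) :=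
  cs.lift ⟨cs.parityPerm, cs.isLiftable_parityPerm⟩

/-- The parity of the number of occurrences of `t` in the right inversion sequence of any word
for `x` (see `invParity_wordProd`). -/
noncomputable def invParity (x t : W) : ZMod 2 := (cs.parityRep x (t, 0)).2

theorem parityRep_wordProd_apply (ω : List B) (t : W) (e : ZMod 2) :
    cs.parityRep (π ω) (t, e) = (π ω * t * (π ω)⁻¹, e + (ris ω).count t) := by
  rw [← prod_map_parityPerm_apply, wordProd, map_list_prod, map_map]
  congr 3
  funext i
  exact cs.lift_apply_simple cs.isLiftable_parityPerm i

theorem invParity_wordProd (ω : List B) (t : W) : cs.invParity (π ω) t = (ris ω).count t := by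
  simp [invParity, parityRep_wordProd_apply]

theorem parityRep_apply (x t : W) (e : ZMod 2) :
    cs.parityRep x (t, e) = (x * t * x⁻¹, e + cs.invParity x t) := by
  obtain ⟨ω, rfl⟩ := cs.wordProd_surjective x
  rw [parityRep_wordProd_apply, invParity_wordProd]

theorem invParity_mul (x y t : W) :
    cs.invParity (x * y) t = cs.invParity y t + cs.invParity x (y * t * y⁻¹) := by
  show (cs.parityRep (x * y) (t, 0)).2 = _
  rw [map_mul, Equiv.Perm.mul_apply, parityRep_apply cs y, parityRep_apply, zero_add]

theorem invParity_one (t : W) : cs.invParity 1 t = 0 := by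
  simp [invParity]

theorem invParity_simple (i : B) (t : W) :
    cs.invParity (s i) t = if t = s i then 1 else 0 := by
  rw [← wordProd_singleton, invParity_wordProd, rightInvSeq_singleton, count_singleton]
  by_cases h : t = s i <;> simp [h, Ne.symm]

theorem invParity_eq_one_iff_mem {ω : List B} (hω : cs.IsReduced ω) (t : W) :
    cs.invParity (π ω) t = 1 ↔ t ∈ ris ω := by
  rw [invParity_wordProd]
  by_cases ht : t ∈ ris ω
  · simp [ht, count_eq_one_of_mem hω.nodup_rightInvSeq ht]
  · simp [ht, count_eq_zero_of_not_mem ht]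

theorem exists_isReduced_concat_of_isRightDescent {x : W} {i : B} (h : cs.IsRightDescent x i) :
    ∃ ω : List B, cs.IsReduced (ω.concat i) ∧ π (ω.concat i) = x := by
  obtain ⟨ω, hω, hxω⟩ := cs.exists_isReduced (x * s i)
  have hx : π (ω.concat i) = x := by
    rw [wordProd_concat, ← hxω, simple_mul_simple_cancel_right]
  refine ⟨ω, ?_, hx⟩
  rw [IsReduced, hx, length_concat, ← hω.eq, ← hxω, cs.isRightDescent_iff.mp h]

theorem mem_supportSet_of_isRightDescent {w : W} {i : B} (h : cs.IsRightDescent w i) :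
    i ∈ supportSet cs w := by
  obtain ⟨ω, hω, hw⟩ := cs.exists_isReduced_concat_of_isRightDescent h
  exact ⟨ω.concat i, hω, hw, by simp⟩

theorem invParity_simple_of_isRightDescent {x : W} {i : B} (h : cs.IsRightDescent x i) :
    cs.invParity x (s i) = 1 := by
  obtain ⟨ω, hω, rfl⟩ := cs.exists_isReduced_concat_of_isRightDescent h
  rw [invParity_eq_one_iff_mem cs hω, rightInvSeq_concat]
  simp

theorem invParity_simple_eq_one_iff {x : W} {i : B} :
    cs.invParity x (s i) = 1 ↔ cs.IsRightDescent x i := by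
  refine ⟨fun h => ?_, cs.invParity_simple_of_isRightDescent⟩
  by_contra hx
  have hxi : cs.IsRightDescent (x * s i) i := by
    rwa [isRightDescent_iff_not_isRightDescent_mul, simple_mul_simple_cancel_right]
  have h2 := cs.invParity_simple_of_isRightDescent hxi
  rw [invParity_mul, invParity_simple, if_pos rfl, inv_simple, simple_mul_simple_cancel_right,
    h] at h2
  exact absurd h2 (by decide)

theorem length_le_of_invParity_imp {v w : W}
    (h : ∀ t, cs.invParity v t = 1 → cs.invParity w t = 1) : ℓ v ≤ ℓ w := by
  obtain ⟨α, hα, rfl⟩ := cs.exists_isReduced v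
  obtain ⟨β, hβ, rfl⟩ := cs.exists_isReduced w
  have hsub : (ris α).toFinset ⊆ (ris β).toFinset := fun t ht => by
    rw [mem_toFinset, ← invParity_eq_one_iff_mem cs hα] at ht
    rw [mem_toFinset, ← invParity_eq_one_iff_mem cs hβ]
    exact h t ht
  have hcard := Finset.card_le_card hsub
  rwa [toFinset_card_of_nodup hα.nodup_rightInvSeq, toFinset_card_of_nodup hβ.nodup_rightInvSeq,
    length_rightInvSeq, length_rightInvSeq, ← hα.eq, ← hβ.eq] at hcard

theorem finite_simple_image_setOf_isRightDescent (w : W) :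
    (cs.simple '' {i | cs.IsRightDescent w i}).Finite := by
  obtain ⟨ω, hω, rfl⟩ := cs.exists_isReduced w
  refine (List.finite_toSet (ris ω)).subset ?_
  rintro _ ⟨i, hi, rfl⟩
  exact (invParity_eq_one_iff_mem cs hω _).mp (cs.invParity_simple_of_isRightDescent hi)

section Closure

variable {cs} {A : Set B}

theorem mem_closure_of_forall_isRightDescent_mul {x : W}
    (hx : ∀ v ∈ Subgroup.closure (cs.simple '' A), ∀ c, cs.IsRightDescent (x * v) c → c ∈ A) :
    x ∈ Subgroup.closure (cs.simple '' A) := by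
  induction hn : ℓ x using Nat.strong_induction_on generalizing x with
  | _ n ih =>
  by_cases hx1 : x = 1
  · exact hx1 ▸ one_mem _
  obtain ⟨c, hc⟩ := cs.exists_rightDescent_of_ne_one hx1
  have hcA : s c ∈ Subgroup.closure (cs.simple '' A) :=
    Subgroup.subset_closure ⟨c, hx 1 (one_mem _) c (by rwa [mul_one]), rfl⟩
  have hxc : x * s c ∈ Subgroup.closure (cs.simple '' A) := by
    refine ih _ (hn ▸ hc) (fun v hv d hd => hx (s c * v) (mul_mem hcA hv) d ?_) rfl
    rwa [← mul_assoc]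
  simpa using mul_mem hxc hcA

theorem IsReduced.mem_of_wordProd_mem_closure
    (hA : ∀ v ∈ Subgroup.closure (cs.simple '' A), ∀ c, cs.IsRightDescent v c → c ∈ A)
    {ω : List B} (hω : cs.IsReduced ω) (hmem : π ω ∈ Subgroup.closure (cs.simple '' A)) {i : B}
    (hi : i ∈ ω) : i ∈ A := by
  induction ω with
  | nil => simp at hi
  | cons j ω ih =>
    have hj : cs.IsLeftDescent (π (j :: ω)) j := by
      have := cs.length_wordProd_le ω
      have := hω.eq
      rw [IsLeftDescent, this, length_cons, wordProd_cons, simple_mul_simple_cancel_left]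
      omega
    have hjA : j ∈ A := hA _ (inv_mem hmem) j (cs.isRightDescent_inv_iff.mpr hj)
    rcases mem_cons.mp hi with rfl | hi
    · exact hjA
    · refine ih (hω.drop 1) ?_ hi
      have := mul_mem (Subgroup.subset_closure (Set.mem_image_of_mem cs.simple hjA)) hmem
      rwa [wordProd_cons, simple_mul_simple_cancel_left] at this

theorem finite_closure_of_length_le
    (hA : ∀ v ∈ Subgroup.closure (cs.simple '' A), ∀ c, cs.IsRightDescent v c → c ∈ A)
    (hfin : (cs.simple '' A).Finite) {n : ℕ}
    (hlen : ∀ v ∈ Subgroup.closure (cs.simple '' A), ℓ v ≤ n) :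
    (Subgroup.closure (cs.simple '' A) : Set W).Finite := by
  refine ((List.finite_setOf_length_le_forall_mem hfin n).image List.prod).subset ?_
  intro v hv
  obtain ⟨ω, hω, rfl⟩ := cs.exists_isReduced v
  refine ⟨ω.map cs.simple, ⟨by simpa [← hω.eq] using hlen _ hv, ?_⟩, rfl⟩
  intro x hx
  obtain ⟨i, hi, rfl⟩ := mem_map.mp hx
  exact Set.mem_image_of_mem _ (hω.mem_of_wordProd_mem_closure hA hv hi)

end Closure

section Passing

variable {cs} {w : W}

theorem invParity_conj_simple_of_mul_simple_eq {i j : B} (h : w * s i = s j * w) (t : W) :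
    cs.invParity w (s i * t * s i) = cs.invParity w t := by
  have hconj : w * t * w⁻¹ = s j ↔ t = s i := by
    rw [show s j = w * s i * w⁻¹ by rw [h]; group, mul_left_inj, mul_right_inj]
  have h₁ := cs.invParity_mul w (s i) t
  have h₂ := cs.invParity_mul (s j) w t
  rw [h, inv_simple] at h₁
  rw [h₁, invParity_simple, invParity_simple, hconj, add_comm] at h₂
  exact add_right_cancel h₂

theorem invParity_conj_of_mem_closure {A : Set B} (hpass : ∀ i ∈ A, ∃ j, w * s i = s j * w)
    {v : W} (hv : v ∈ Subgroup.closure (cs.simple '' A)) (t : W) :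
    cs.invParity w (v * t * v⁻¹) = cs.invParity w t := by
  induction hv using Subgroup.closure_induction_right generalizing t with
  | one => simp
  | mul_right x _ y hy ih | mul_inv_cancel x _ y hy ih =>
    obtain ⟨i, hi, rfl⟩ := hy
    obtain ⟨j, hj⟩ := hpass i hi
    simp only [inv_simple, mul_inv_rev, ← mul_assoc] at ih ⊢
    rw [show x * s i * t * s i * x⁻¹ = x * (s i * t * s i) * x⁻¹ by group, ih,
      invParity_conj_simple_of_mul_simple_eq hj]

theorem invParity_imp_of_mem_closure {A : Set B} (hdesc : ∀ i ∈ A, cs.IsRightDescent w i)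
    (hpass : ∀ i ∈ A, ∃ j, w * s i = s j * w) {v : W}
    (hv : v ∈ Subgroup.closure (cs.simple '' A)) {t : W} :
    cs.invParity v t = 1 → cs.invParity w t = 1 := by
  induction hv using Subgroup.closure_induction_right generalizing t with
  | one => simp [invParity_one]
  | mul_right x _ y hy ih | mul_inv_cancel x _ y hy ih =>
    obtain ⟨i, hi, rfl⟩ := hy
    obtain ⟨j, hj⟩ := hpass i hi
    simp only [inv_simple, invParity_mul, invParity_simple]
    by_cases ht : t = s i
    · exact fun _ => ht ▸ cs.invParity_simple_of_isRightDescent (hdesc i hi)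
    · rw [if_neg ht, zero_add, ← invParity_conj_simple_of_mul_simple_eq hj t]
      exact ih

theorem invParity_mul_imp_of_mem_closure {A : Set B} (hdesc : ∀ i ∈ A, cs.IsRightDescent w i)
    (hpass : ∀ i ∈ A, ∃ j, w * s i = s j * w) {v : W}
    (hv : v ∈ Subgroup.closure (cs.simple '' A)) {t : W} :
    cs.invParity (w * v) t = 1 → cs.invParity w t = 1 := by
  rw [invParity_mul, invParity_conj_of_mem_closure hpass hv]
  have hvw := invParity_imp_of_mem_closure hdesc hpass hv (t := t)
  generalize cs.invParity v t = a at hvw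
  generalize cs.invParity w t = b at hvw ⊢
  revert a b
  decide

end Passing

end CoxeterSystem

theorem longest_of_all_descents_pass_general (cs : CoxeterSystem M W) {w : W}
    (hpass : ∀ i : B, cs.IsRightDescent w i → ∃ j : B, w * cs.simple i = cs.simple j * w) :
    {i : B | cs.IsRightDescent w i} = supportSet cs w ∧
    w ∈ Subgroup.closure (cs.simple '' supportSet cs w) ∧
    (∀ u ∈ Subgroup.closure (cs.simple '' supportSet cs w), cs.length u ≤ cs.length w) ∧
    (Subgroup.closure (cs.simple '' supportSet cs w) : Set W).Finite := by
  set J := {i : B | cs.IsRightDescent w i}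
  have hJ : ∀ i ∈ J, cs.IsRightDescent w i := fun _ => id
  have hdesc : ∀ v ∈ Subgroup.closure (cs.simple '' J), ∀ c, cs.IsRightDescent v c → c ∈ J :=
    fun v hv c hc => cs.invParity_simple_eq_one_iff.mp <|
      invParity_imp_of_mem_closure hJ hpass hv (cs.invParity_simple_eq_one_iff.mpr hc)
  have hmem : w ∈ Subgroup.closure (cs.simple '' J) :=
    mem_closure_of_forall_isRightDescent_mul fun v hv c hc => cs.invParity_simple_eq_one_iff.mp <|
      invParity_mul_imp_of_mem_closure hJ hpass hv (cs.invParity_simple_eq_one_iff.mpr hc)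
  have hlen : ∀ v ∈ Subgroup.closure (cs.simple '' J), cs.length v ≤ cs.length w :=
    fun v hv => cs.length_le_of_invParity_imp fun _ => invParity_imp_of_mem_closure hJ hpass hv
  have hsupp : J = supportSet cs w := by
    refine Set.Subset.antisymm (fun i => cs.mem_supportSet_of_isRightDescent) ?_
    rintro i ⟨ω, hω, rfl, hi⟩
    exact hω.mem_of_wordProd_mem_closure hdesc hmem hi
  rw [← hsupp]
  exact ⟨rfl, hmem, hlen,
    finite_closure_of_length_le hdesc (cs.finite_simple_image_setOf_isRightDescent w) hlen⟩

/-- if every right descent `s` of `w ∈ 𝕀(θ)` passes through `w`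
(i.e. `ws = s̃w` for some `s̃ ∈ S`), then `w` is the longest element of the finite parabolic
subgroup generated by its support, and its right descent set equals its support. -/
theorem longest_of_all_descents_pass (cs : CoxeterSystem M W) (θ : W ≃* W)
    (hθ : ∀ w : W, θ (θ w) = w) (σ : B → B)
    (hσ : ∀ i : B, θ (cs.simple i) = cs.simple (σ i))
    {w : W} (hw : w ∈ TwistedInvolutions θ)
    (hpass : ∀ i : B, cs.IsRightDescent w i → ∃ j : B, w * cs.simple i = cs.simple j * w) :
    {i : B | cs.IsRightDescent w i} = supportSet cs w ∧
    w ∈ Subgroup.closure (cs.simple '' supportSet cs w) ∧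
    (∀ u ∈ Subgroup.closure (cs.simple '' supportSet cs w), cs.length u ≤ cs.length w) ∧
    (Subgroup.closure (cs.simple '' supportSet cs w) : Set W).Finite :=
  longest_of_all_descents_pass_general cs hpass
end
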